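/- arXiv:1704.03713 — 2 statements merged into one kernel-verified Lean document; each statement's English description precedes it below -/
import Mathlib

section
/- Let n ≥ 1. For s ∈ {0,1,2,3} let s̄ := {U ∈ Cl_{p,q} : involute U = (−1)^s U ∧ reverse U = (−1)^{s(s−1)/2} U} (the quaternion-type subspace of type s). Then the real dimension of 0̄ satisfies (as an equality of real numbers) 4 · (Module.finrank ℝ 0̄) = 2^n + 2·(√2)^n · cos(πn/4), i.e. dim 0̄ = 2^{n−2} + 2^{(n−2)/2} cos(πn/4). -/
open CliffordAlgebra

/-- The quadratic form of signature `(p,q)` on `Fin (p+q) → ℝ`: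
`Q(x) = ∑_{i<p} x_i² − ∑_{p≤i<n} x_i²`. -/
noncomputable def Qpq (p q : ℕ) : QuadraticForm ℝ (Fin (p + q) → ℝ) :=
  QuadraticMap.weightedSumSquares ℝ (fun i : Fin (p + q) => if (i : ℕ) < p then (1 : ℝ) else -1)

/-- The quaternion-type subspace `s̄` of the Clifford algebra `Cl_{p,q}`:
elements `U` with `involute U = (−1)^s • U` and `reverse U = (−1)^{s(s−1)/2} • U`. -/
noncomputable def quatType (p q s : ℕ) : Submodule ℝ (CliffordAlgebra (Qpq p q)) where
  carrier := {U | involute U = ((-1 : ℝ) ^ s) • U ∧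
      reverse U = ((-1 : ℝ) ^ (s * (s - 1) / 2)) • U}
  add_mem' := by
    rintro a b ⟨ha1, ha2⟩ ⟨hb1, hb2⟩
    exact ⟨by simp [ha1, hb1, smul_add], by simp [ha2, hb2, smul_add]⟩
  zero_mem' := by simp
  smul_mem' := by
    rintro c a ⟨h1, h2⟩
    exact ⟨by rw [map_smul, h1, smul_comm], by rw [map_smul, h2, smul_comm]⟩

/-!
Since `2` is invertible, `CliffordAlgebra Q` is isomorphic as a module to the exterior algebra
(`CliffordAlgebra.equivExterior`, a change of form by the bilinear form associated with `Q`).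
This isomorphism carries exterior products of pairwise orthogonal vectors to their Clifford
products, so for a `Q`-orthogonal basis the exterior basis `e_S` becomes a basis of Clifford
products of `|S|` pairwise anticommuting generators. On such a product `involute` acts by
`(-1)^|S|` and `reverse` by `(-1)^(|S| choose 2)`, hence `0̄` is spanned by the `e_S` with
`4 ∣ |S|`. These subsets are counted by the roots-of-unity filter
`4 · #{S | 4 ∣ |S|} = ∑_{ζ⁴ = 1} (1 + ζ)^n = 2^n + (1 + i)^n + (1 - i)^n`, and
`1 + i = √2 · exp(iπ/4)`.
-/

namespace Module.Basis

variable {K V ι : Type*} [Field K] [AddCommGroup V] [Module K V] (b : Basis ι K V)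

theorem repr_apply_of_apply_eq_smul {f : V →ₗ[K] V} {d : ι → K}
    (hf : ∀ i, f (b i) = d i • b i) (x : V) (i : ι) : b.repr (f x) i = d i * b.repr x i := by
  have hcoord : (b.coord i).comp f = d i • b.coord i :=
    b.ext fun j => by
      rcases eq_or_ne j i with rfl | hji
      · simp [hf]
      · simp [hf, hji]
  exact LinearMap.congr_fun hcoord x

theorem apply_eq_self_iff_of_apply_eq_smul {f : V →ₗ[K] V} {d : ι → K}
    (hf : ∀ i, f (b i) = d i • b i) (x : V) :
    f x = x ↔ ∀ i, b.repr x i ≠ 0 → d i = 1 := by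
  rw [← b.repr.injective.eq_iff, Finsupp.ext_iff]
  refine forall_congr' fun i => ?_
  rw [repr_apply_of_apply_eq_smul b hf]
  by_cases h : b.repr x i = 0 <;> simp [h, mul_eq_right₀]

theorem finrank_eq_card_filter [Fintype ι] (W : Submodule K V) (P : ι → Prop) [DecidablePred P]
    (hW : ∀ x, x ∈ W ↔ ∀ i, b.repr x i ≠ 0 → P i) :
    finrank K W = (Finset.univ.filter P).card := by
  have hspan : W = Submodule.span K (Set.range (b ∘ Subtype.val : {i // P i} → V)) := by
    ext x
    simp only [Set.range_comp, Subtype.range_coe_subtype, b.mem_span_image, hW, Set.subset_def,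
      Finset.mem_coe, Finsupp.mem_support_iff, Set.mem_ofPred_eq]
  rw [hspan, finrank_span_eq_card (b.linearIndependent.comp _ Subtype.val_injective),
    Fintype.card_subtype]

end Module.Basis

section

variable {R A : Type*} [CommRing R] [Ring A] [Algebra R A]

theorem List.prod_mul_eq_neg_one_pow_smul {a : A} (l : List A)
    (h : ∀ b ∈ l, a * b = -(b * a)) :
    l.prod * a = ((-1 : R) ^ l.length) • (a * l.prod) := by
  induction l with
  | nil => simp
  | cons b t ih =>
    rw [List.forall_mem_cons] at h
    rw [List.prod_cons, mul_assoc, ih h.2, mul_smul_comm, ← mul_assoc,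
      ← neg_eq_iff_eq_neg.mpr h.1, List.length_cons, pow_succ, mul_comm, mul_smul, neg_one_smul,
      neg_mul, smul_neg, mul_assoc]

theorem List.prod_reverse_eq_neg_one_pow_smul (l : List A)
    (h : l.Pairwise fun a b => a * b = -(b * a)) :
    l.reverse.prod = ((-1 : R) ^ l.length.choose 2) • l.prod := by
  induction l with
  | nil => simp
  | cons a t ih =>
    rw [List.pairwise_cons] at h
    rw [List.reverse_cons, List.prod_append, ih h.2, List.prod_singleton, smul_mul_assoc,
      List.prod_mul_eq_neg_one_pow_smul (R := R) t h.1, smul_smul, ← pow_add, List.length_cons,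
      Nat.choose_succ_succ', Nat.choose_one_right, add_comm, List.prod_cons]

end

theorem Nat.even_and_even_choose_two_iff : ∀ k : ℕ, Even k ∧ Even (k.choose 2) ↔ 4 ∣ k
  | 0 | 1 | 2 | 3 => by decide
  | k + 4 => by
    have hstep : (k + 4).choose 2 = k.choose 2 + 2 * (2 * k + 3) := by
      simp [Nat.choose_succ_succ']
      ring
    rw [hstep, Nat.even_add, Nat.even_add, iff_true_intro (even_two_mul _),
      iff_true_intro (by decide : Even 4), iff_true, iff_true, Nat.dvd_add_self_right]
    exact Nat.even_and_even_choose_two_iff k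

namespace CliffordAlgebra

variable {R M : Type*} [CommRing R] [AddCommGroup M] [Module R M] {Q Q' : QuadraticForm R M}

theorem contractLeft_prod_map_ι_eq_zero {d : Module.Dual R M} {l : List M}
    (h : ∀ m ∈ l, d m = 0) : contractLeft d (l.map (ι Q)).prod = 0 := by
  induction l with
  | nil => simp
  | cons a t ih =>
    rw [List.forall_mem_cons] at h
    rw [List.map_cons, List.prod_cons, contractLeft_ι_mul, h.1, ih h.2, zero_smul, mul_zero,
      sub_zero]

theorem changeForm_prod_map_ι {B : LinearMap.BilinForm R M}
    (hB : B.toQuadraticMap = Q' - Q) {l : List M} (h : l.Pairwise fun a b => B a b = 0) :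
    changeForm hB (l.map (ι Q)).prod = (l.map (ι Q')).prod := by
  induction l with
  | nil => simp
  | cons a t ih =>
    rw [List.pairwise_cons] at h
    rw [List.map_cons, List.prod_cons, changeForm_ι_mul, ih h.2,
      contractLeft_prod_map_ι_eq_zero h.1, sub_zero, List.map_cons, List.prod_cons]

end CliffordAlgebra

namespace Module.Basis

section CommRing

variable {R M I : Type*} [CommRing R] [AddCommGroup M] [Module R M] [Invertible (2 : R)]
  [LinearOrder I] (Q : QuadraticForm R M) (b : Basis I R M)

noncomputable def cliffordAlgebra : Basis (Finset I) R (CliffordAlgebra Q) :=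
  b.ExteriorAlgebra.map (equivExterior Q).symm

variable {Q b}

theorem cliffordAlgebra_eq_prod_map_ι (hb : Pairwise fun i j => Q.IsOrtho (b i) (b j))
    (s : Finset I) : ∃ l : List M, l.length = s.card ∧ l.Pairwise Q.IsOrtho ∧
      b.cliffordAlgebra Q s = (l.map (ι Q)).prod := by
  set f := Set.powersetCard.ofFinEmbEquiv.symm (Set.powersetCard.ofCard (rfl : s.card = s.card))
  have hl : (List.ofFn (b ∘ f)).Pairwise Q.IsOrtho :=
    List.pairwise_ofFn.mpr fun i j hij => hb (f.injective.ne hij.ne)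
  refine ⟨List.ofFn (b ∘ f), List.length_ofFn, hl, ?_⟩
  rw [cliffordAlgebra, map_apply, ExteriorAlgebra.basis_apply_ofCard b rfl]
  change (equivExterior Q).symm (ExteriorAlgebra.ιMulti R s.card (b ∘ f)) = _
  rw [ExteriorAlgebra.ιMulti_apply, show (List.ofFn fun i => ExteriorAlgebra.ι R ((b ∘ f) i)) =
    (List.ofFn (b ∘ f)).map (ι 0) from (List.map_ofFn ..).symm]
  simp only [equivExterior, changeFormEquiv_symm, changeFormEquiv_apply]
  exact changeForm_prod_map_ι _ (hl.imp fun h => by simp [h])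

theorem involute_cliffordAlgebra (hb : Pairwise fun i j => Q.IsOrtho (b i) (b j))
    (s : Finset I) :
    involute (b.cliffordAlgebra Q s) = ((-1 : R) ^ s.card) • b.cliffordAlgebra Q s := by
  obtain ⟨l, hlen, -, hs⟩ := b.cliffordAlgebra_eq_prod_map_ι hb s
  rw [hs, involute_prod_map_ι, hlen]

theorem reverse_cliffordAlgebra (hb : Pairwise fun i j => Q.IsOrtho (b i) (b j))
    (s : Finset I) :
    reverse (b.cliffordAlgebra Q s) = ((-1 : R) ^ s.card.choose 2) • b.cliffordAlgebra Q s := by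
  obtain ⟨l, hlen, hl, hs⟩ := b.cliffordAlgebra_eq_prod_map_ι hb s
  have hanti : (l.map (ι Q)).Pairwise fun x y => x * y = -(y * x) :=
    List.pairwise_map.mpr (hl.imp ι_mul_ι_comm_of_isOrtho)
  rw [hs, reverse_prod_map_ι, List.prod_reverse_eq_neg_one_pow_smul (R := R) _ hanti,
    List.length_map, hlen]

end CommRing

variable {K M I : Type*} [Field K] [AddCommGroup M] [Module K M] [Invertible (2 : K)]
  [LinearOrder I] {Q : QuadraticForm K M} {b : Basis I K M}

theorem involute_eq_self_and_reverse_eq_self_iff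
    (hb : Pairwise fun i j => Q.IsOrtho (b i) (b j)) (x : CliffordAlgebra Q) :
    involute x = x ∧ reverse x = x ↔
      ∀ s, (b.cliffordAlgebra Q).repr x s ≠ 0 → 4 ∣ s.card := by
  have hneg : (-1 : K) ≠ 1 := fun h => two_ne_zero' K (by linear_combination -h)
  change involute.toLinearMap x = x ∧ _ ↔ _
  rw [(b.cliffordAlgebra Q).apply_eq_self_iff_of_apply_eq_smul (f := involute.toLinearMap)
      (b.involute_cliffordAlgebra hb),
    (b.cliffordAlgebra Q).apply_eq_self_iff_of_apply_eq_smul (b.reverse_cliffordAlgebra hb),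
    ← forall_and]
  simp only [← imp_and, neg_one_pow_eq_one_iff_even hneg, Nat.even_and_even_choose_two_iff]

end Module.Basis

theorem QuadraticMap.pairwise_isOrtho_weightedSumSquares_basisFun {R ι : Type*} [CommRing R]
    [Fintype ι] [DecidableEq ι] (w : ι → R) :
    Pairwise fun i j =>
      (weightedSumSquares R w).IsOrtho (Pi.basisFun R ι i) (Pi.basisFun R ι j) := by
  intro i j hij
  rw [Pi.basisFun_apply, Pi.basisFun_apply, isOrtho_def]
  simp only [weightedSumSquares_apply, ← Finset.sum_add_distrib]
  refine Finset.sum_congr rfl fun k _ => ?_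
  rcases eq_or_ne k i with rfl | hki <;> rcases eq_or_ne k j with rfl | hkj <;> simp_all

namespace Complex

theorem one_add_I_eq : 1 + I = (Real.sqrt 2 : ℂ) * exp ((Real.pi / 4 : ℝ) * I) := by
  rw [exp_mul_I, ← ofReal_cos, ← ofReal_sin, Real.cos_pi_div_four, Real.sin_pi_div_four,
    mul_add, ← mul_assoc, ← ofReal_mul, show Real.sqrt 2 * (Real.sqrt 2 / 2) = 1 by
      rw [← mul_div_assoc, Real.mul_self_sqrt zero_le_two]; norm_num]
  simp

theorem re_one_add_I_pow (n : ℕ) :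
    ((1 + I) ^ n).re = Real.sqrt 2 ^ n * Real.cos (Real.pi * n / 4) := by
  rw [one_add_I_eq, mul_pow, ← exp_nat_mul, ← ofReal_pow, re_ofReal_mul, ← mul_assoc,
    ← ofReal_natCast, ← ofReal_mul, exp_ofReal_mul_I_re]
  ring_nf

theorem ite_four_dvd_eq (k : ℕ) :
    (if 4 ∣ k then 4 else 0 : ℂ) = 1 + (-1) ^ k + I ^ k + (-I) ^ k := by
  obtain ⟨q, r, hr, rfl⟩ : ∃ q r, r < 4 ∧ k = 4 * q + r :=
    ⟨k / 4, k % 4, by omega, by omega⟩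
  have hperiod : ∀ x : ℂ, x ^ 4 = 1 → x ^ (4 * q + r) = x ^ r := fun x hx => by
    rw [pow_add, pow_mul, hx, one_pow, one_mul]
  rw [hperiod (-1) (by norm_num), hperiod I I_pow_four,
    hperiod (-I) (by rw [Even.neg_pow (by decide), I_pow_four])]
  simp only [show 4 ∣ 4 * q + r ↔ r = 0 by omega]
  interval_cases r <;> norm_num [pow_succ]

end Complex

open Complex in
theorem Finset.four_mul_card_filter_four_dvd_card {n : ℕ} (hn : 1 ≤ n) :
    4 * ((univ.filter fun s : Finset (Fin n) => 4 ∣ s.card).card : ℝ) =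
      2 ^ n + 2 * Real.sqrt 2 ^ n * Real.cos (Real.pi * n / 4) := by
  have hsum : ∀ x : ℂ, ∑ s : Finset (Fin n), x ^ s.card = (x + 1) ^ n := fun x => by
    simpa using Fin.sum_pow_mul_eq_add_pow x 1
  have hC : 4 * ((univ.filter fun s : Finset (Fin n) => 4 ∣ s.card).card : ℂ) =
      2 ^ n + (1 + I) ^ n + (1 - I) ^ n := by
    rw [card_filter, Nat.cast_sum, mul_sum]
    simp only [Nat.cast_ite, Nat.cast_one, Nat.cast_zero, mul_ite, mul_one, mul_zero,
      ite_four_dvd_eq, sum_add_distrib, hsum]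
    rw [sum_const, card_univ, Fintype.card_finset, Fintype.card_fin, neg_add_cancel,
      zero_pow (by omega)]
    ring
  have hconj : (1 - I) ^ n = (starRingEnd ℂ) ((1 + I) ^ n) := by simp [sub_eq_add_neg]
  apply ofReal_injective
  push_cast
  rw [hC, add_assoc, hconj, add_conj, re_one_add_I_pow]
  push_cast
  ring

/-- Theorem 1 (first part), Shirokov: `dim 0̄ = 2^{n−2} + 2^{(n−2)/2} cos(πn/4)`,
stated as `4 · dim 0̄ = 2^n + 2·(√2)^n·cos(πn/4)`. -/
theorem statement0 (p q : ℕ) (hn : 1 ≤ p + q) :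
    4 * (Module.finrank ℝ (quatType p q 0) : ℝ) =
      2 ^ (p + q) + 2 * Real.sqrt 2 ^ (p + q) * Real.cos (Real.pi * (p + q) / 4) := by
  have hb : Pairwise fun i j => (Qpq p q).IsOrtho (Pi.basisFun ℝ _ i) (Pi.basisFun ℝ _ j) :=
    QuadraticMap.pairwise_isOrtho_weightedSumSquares_basisFun _
  have hmem : ∀ U, U ∈ quatType p q 0 ↔ involute U = U ∧ reverse U = U := fun U => by
    simp [quatType]
  rw [((Pi.basisFun ℝ _).cliffordAlgebra (Qpq p q)).finrank_eq_card_filter _ (4 ∣ ·.card)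
      fun U => (hmem U).trans ((Pi.basisFun ℝ _).involute_eq_self_and_reverse_eq_self_iff hb U),
    Finset.four_mul_card_filter_four_dvd_card hn]
  push_cast
  ring_nf
end

section
/- Let τ := σ ∘ (id ⊗ involute) be the ℝ-algebra automorphism of ℂ ⊗[ℝ] Cl_{p,q} acting by complex conjugation on the ℂ factor and by grade involution on Cl_{p,q}. Then the fixed-point set {x ∈ ℂ ⊗[ℝ] Cl_{p,q} : τ(x) = x} is an ℝ-subalgebra (equal to Cl⁰_{p,q} ⊕ i Cl¹_{p,q}), and it is isomorphic as an ℝ-algebra to CliffordAlgebra (−Q_{p,q}), i.e. to the real Clifford algebra of signature (q,p). -/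
open CliffordAlgebra TensorProduct

/-- Complex conjugation `σ = conj ⊗ id` on the complexified Clifford algebra. -/
noncomputable def conjC (p q : ℕ) :
    (ℂ ⊗[ℝ] CliffordAlgebra (Qpq p q)) →ₐ[ℝ] (ℂ ⊗[ℝ] CliffordAlgebra (Qpq p q)) :=
  Algebra.TensorProduct.map (Complex.conjAe.toAlgHom) (AlgHom.id ℝ _)

/-- The automorphism `τ = σ ∘ (id ⊗ involute)` of the complexified Clifford algebra:
complex conjugation on `ℂ` and grade involution on `Cl_{p,q}`. -/
noncomputable def tauC (p q : ℕ) :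
    (ℂ ⊗[ℝ] CliffordAlgebra (Qpq p q)) →ₐ[ℝ] (ℂ ⊗[ℝ] CliffordAlgebra (Qpq p q)) :=
  (conjC p q).comp
    (Algebra.TensorProduct.map (AlgHom.id ℝ ℂ) (involute (Q := Qpq p q)))


section Gen
variable {V : Type*} [AddCommGroup V] [Module ℝ V] (Q : QuadraticForm ℝ V)

noncomputable def negHomA : CliffordAlgebra Q →ₐ[ℝ] ℂ ⊗[ℝ] CliffordAlgebra (-Q) :=
  CliffordAlgebra.lift Q ⟨(TensorProduct.mk ℝ ℂ _ Complex.I) ∘ₗ ι (-Q), fun v => by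
    simp only [LinearMap.comp_apply, TensorProduct.mk_apply, Algebra.TensorProduct.tmul_mul_tmul]
    simp [Complex.I_mul_I, ι_sq_scalar, Algebra.algebraMap_eq_smul_one,
      TensorProduct.tmul_smul, tmul_neg, neg_tmul, ← Algebra.TensorProduct.one_def]⟩

noncomputable def negHomB : CliffordAlgebra (-Q) →ₐ[ℝ] ℂ ⊗[ℝ] CliffordAlgebra Q :=
  CliffordAlgebra.lift (-Q) ⟨(TensorProduct.mk ℝ ℂ _ (-Complex.I)) ∘ₗ ι Q, fun v => by
    simp only [LinearMap.comp_apply, TensorProduct.mk_apply, Algebra.TensorProduct.tmul_mul_tmul]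
    simp [Complex.I_mul_I, ι_sq_scalar, Algebra.algebraMap_eq_smul_one,
      TensorProduct.tmul_smul, tmul_neg, neg_tmul, ← Algebra.TensorProduct.one_def]⟩

@[simp] lemma negHomA_ι (v : V) : negHomA Q (ι Q v) = Complex.I ⊗ₜ[ℝ] ι (-Q) v := by
  rw [negHomA, lift_ι_apply]; rfl

@[simp] lemma negHomB_ι (v : V) : negHomB Q (ι (-Q) v) = -(Complex.I ⊗ₜ[ℝ] ι Q v) := by
  rw [negHomB, lift_ι_apply]; rfl

lemma commL {B : Type*} [Ring B] [Algebra ℝ B] (c : ℂ) (y : ℂ ⊗[ℝ] B) :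
    Commute ((Algebra.TensorProduct.includeLeft : ℂ →ₐ[ℝ] ℂ ⊗[ℝ] B) c) y :=
  Algebra.commutes c y

noncomputable def Fmap : ℂ ⊗[ℝ] CliffordAlgebra Q →ₐ[ℝ] ℂ ⊗[ℝ] CliffordAlgebra (-Q) :=
  Algebra.TensorProduct.lift Algebra.TensorProduct.includeLeft (negHomA Q)
    (fun c _ => commL c _)

noncomputable def Gmap : ℂ ⊗[ℝ] CliffordAlgebra (-Q) →ₐ[ℝ] ℂ ⊗[ℝ] CliffordAlgebra Q :=
  Algebra.TensorProduct.lift Algebra.TensorProduct.includeLeft (negHomB Q)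
    (fun c _ => commL c _)

@[simp] lemma Fmap_tmul (c : ℂ) (x : CliffordAlgebra Q) :
    Fmap Q (c ⊗ₜ x) = (c ⊗ₜ[ℝ] 1) * negHomA Q x := by
  simp [Fmap, Algebra.TensorProduct.lift_tmul]

@[simp] lemma Gmap_tmul (c : ℂ) (x : CliffordAlgebra (-Q)) :
    Gmap Q (c ⊗ₜ x) = (c ⊗ₜ[ℝ] 1) * negHomB Q x := by
  simp [Gmap, Algebra.TensorProduct.lift_tmul]

noncomputable def Emap : (ℂ ⊗[ℝ] CliffordAlgebra Q) ≃ₐ[ℝ] ℂ ⊗[ℝ] CliffordAlgebra (-Q) := by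
  refine AlgEquiv.ofAlgHom (Fmap Q) (Gmap Q) ?_ ?_
  pick_goal 2
  rotate_left
  · refine Algebra.TensorProduct.ext (Complex.algHom_ext ?_) (CliffordAlgebra.hom_ext (LinearMap.ext fun v => ?_))
    · simp only [AlgHom.comp_apply, Algebra.TensorProduct.includeLeft_apply, AlgHom.coe_id, id_eq]
      simp [Algebra.TensorProduct.tmul_mul_tmul]
    · simp only [LinearMap.comp_apply, AlgHom.toLinearMap_apply, AlgHom.comp_apply,
        AlgHom.restrictScalars_apply, Algebra.TensorProduct.includeRight_apply, AlgHom.coe_id, id_eq]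
      simp only [Fmap_tmul, Gmap_tmul, negHomA_ι, negHomB_ι,
        Algebra.TensorProduct.tmul_mul_tmul, one_mul, mul_one]
      rw [← TensorProduct.neg_tmul, Algebra.TensorProduct.tmul_mul_tmul]
      norm_num
  · refine Algebra.TensorProduct.ext (Complex.algHom_ext ?_) (CliffordAlgebra.hom_ext (LinearMap.ext fun v => ?_))
    · simp only [AlgHom.comp_apply, Algebra.TensorProduct.includeLeft_apply, AlgHom.coe_id, id_eq]
      simp [Algebra.TensorProduct.tmul_mul_tmul]
    · simp only [LinearMap.comp_apply, AlgHom.toLinearMap_apply, AlgHom.comp_apply,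
        AlgHom.restrictScalars_apply, Algebra.TensorProduct.includeRight_apply, AlgHom.coe_id, id_eq]
      simp only [Fmap_tmul, Gmap_tmul, negHomA_ι, negHomB_ι,
        Algebra.TensorProduct.tmul_mul_tmul, one_mul, mul_one]
      rw [← TensorProduct.neg_tmul, Algebra.TensorProduct.tmul_mul_tmul]
      norm_num

end Gen

section Fix
variable {A : Type*} [Ring A] [Algebra ℝ A]

noncomputable def sigA : ℂ ⊗[ℝ] A →ₐ[ℝ] ℂ ⊗[ℝ] A :=
  Algebra.TensorProduct.map (Complex.conjAe.toAlgHom) (AlgHom.id ℝ A)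

@[simp] lemma sigA_tmul (c : ℂ) (a : A) :
    sigA (c ⊗ₜ[ℝ] a) = (starRingEnd ℂ) c ⊗ₜ[ℝ] a := rfl

noncomputable def p1 : ℂ ⊗[ℝ] A →ₗ[ℝ] A :=
  (TensorProduct.lid ℝ A).toLinearMap ∘ₗ (LinearMap.rTensor A Complex.reLm)

noncomputable def p2 : ℂ ⊗[ℝ] A →ₗ[ℝ] A :=
  (TensorProduct.lid ℝ A).toLinearMap ∘ₗ (LinearMap.rTensor A Complex.imLm)

@[simp] lemma p1_tmul (c : ℂ) (a : A) : p1 (c ⊗ₜ[ℝ] a) = c.re • a := by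
  simp [p1]

@[simp] lemma p2_tmul (c : ℂ) (a : A) : p2 (c ⊗ₜ[ℝ] a) = c.im • a := by
  simp [p2]

lemma decompCA (x : ℂ ⊗[ℝ] A) :
    x = (1:ℂ) ⊗ₜ[ℝ] p1 x + Complex.I ⊗ₜ[ℝ] p2 x := by
  induction x using TensorProduct.induction_on with
  | zero => simp
  | tmul c a =>
    rw [p1_tmul, p2_tmul, TensorProduct.tmul_smul, TensorProduct.tmul_smul,
      TensorProduct.smul_tmul', TensorProduct.smul_tmul', ← TensorProduct.add_tmul]
    congr 1
    apply Complex.ext <;> simp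
  | add x y hx hy =>
    rw [map_add, map_add, TensorProduct.tmul_add, TensorProduct.tmul_add]
    conv_lhs => rw [hx, hy]
    abel

lemma p2_sigA (x : ℂ ⊗[ℝ] A) : p2 (sigA x) = - p2 x := by
  induction x using TensorProduct.induction_on with
  | zero => simp
  | tmul c a => simp [neg_smul]
  | add x y hx hy => rw [map_add, map_add, hx, hy, map_add, neg_add]

lemma fixed_mem {x : ℂ ⊗[ℝ] A} (h : sigA x = x) :
    x ∈ (Algebra.TensorProduct.includeRight : A →ₐ[ℝ] ℂ ⊗[ℝ] A).range := by
  have h2 : p2 x = 0 := by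
    have := p2_sigA x
    rw [h] at this
    have h3 : (2:ℝ) • p2 x = 0 := by
      rw [two_smul]; nth_rewrite 2 [this]; exact add_neg_cancel _
    have h4 : p2 x = (2:ℝ)⁻¹ • ((2:ℝ) • p2 x) := by
      rw [smul_smul]; norm_num
    rw [h4, h3, smul_zero]
  refine ⟨p1 x, ?_⟩
  have := decompCA x
  rw [h2, TensorProduct.tmul_zero, add_zero] at this
  exact this.symm

lemma includeRight_injCA :
    Function.Injective (Algebra.TensorProduct.includeRight : A →ₐ[ℝ] ℂ ⊗[ℝ] A) := by
  intro a b hab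
  have := congrArg p1 hab
  simpa using this

lemma range_eq_equalizerCA :
    (Algebra.TensorProduct.includeRight : A →ₐ[ℝ] ℂ ⊗[ℝ] A).range
      = AlgHom.equalizer (sigA) (AlgHom.id ℝ (ℂ ⊗[ℝ] A)) := by
  ext x
  rw [AlgHom.mem_equalizer]
  constructor
  · rintro ⟨a, rfl⟩
    simp
  · intro h
    exact fixed_mem (by simpa using h)

end Fix

section Gen2
variable {V : Type*} [AddCommGroup V] [Module ℝ V] (Q : QuadraticForm ℝ V)

noncomputable def tauT : (ℂ ⊗[ℝ] CliffordAlgebra Q) →ₐ[ℝ] ℂ ⊗[ℝ] CliffordAlgebra Q :=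
  (sigA).comp (Algebra.TensorProduct.map (AlgHom.id ℝ ℂ) (involute (Q := Q)))

@[simp] lemma tauT_tmul (c : ℂ) (x : CliffordAlgebra Q) :
    tauT Q (c ⊗ₜ[ℝ] x) = (starRingEnd ℂ) c ⊗ₜ[ℝ] involute x := rfl

lemma Emap_coe : ((Emap Q : (ℂ ⊗[ℝ] CliffordAlgebra Q) ≃ₐ[ℝ] ℂ ⊗[ℝ] CliffordAlgebra (-Q))
    : (ℂ ⊗[ℝ] CliffordAlgebra Q) →ₐ[ℝ] ℂ ⊗[ℝ] CliffordAlgebra (-Q)) = Fmap Q := rfl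

lemma intertwine : (sigA).comp (Fmap Q) = (Fmap Q).comp (tauT Q) := by
  refine Algebra.TensorProduct.ext (Complex.algHom_ext ?_)
    (CliffordAlgebra.hom_ext (LinearMap.ext fun v => ?_))
  · simp only [AlgHom.comp_apply, Algebra.TensorProduct.includeLeft_apply]
    simp only [Fmap_tmul, tauT_tmul, sigA_tmul, map_one, mul_one, Complex.conj_I]
  · simp only [LinearMap.comp_apply, AlgHom.toLinearMap_apply, AlgHom.comp_apply,
      AlgHom.restrictScalars_apply, Algebra.TensorProduct.includeRight_apply]
    simp only [Fmap_tmul, tauT_tmul, sigA_tmul, negHomA_ι, involute_ι, map_one,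
      Algebra.TensorProduct.tmul_mul_tmul, one_mul, mul_one, Complex.conj_I,
      TensorProduct.tmul_neg, map_neg]
    rfl

lemma map_equalizer :
    (AlgHom.equalizer (tauT Q) (AlgHom.id ℝ (ℂ ⊗[ℝ] CliffordAlgebra Q))).map
        ((Emap Q : (ℂ ⊗[ℝ] CliffordAlgebra Q) ≃ₐ[ℝ] ℂ ⊗[ℝ] CliffordAlgebra (-Q))
          : (ℂ ⊗[ℝ] CliffordAlgebra Q) →ₐ[ℝ] ℂ ⊗[ℝ] CliffordAlgebra (-Q))
      = AlgHom.equalizer (sigA) (AlgHom.id ℝ (ℂ ⊗[ℝ] CliffordAlgebra (-Q))) := by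
  ext x
  simp only [Subalgebra.mem_map, AlgHom.mem_equalizer, AlgHom.coe_id, id_eq]
  constructor
  · rintro ⟨y, hy, rfl⟩
    have h := congrFun (congrArg (DFunLike.coe) (intertwine Q)) y
    simp only [AlgHom.comp_apply] at h
    rw [Emap_coe]
    rw [h, hy]
  · intro hx
    refine ⟨(Emap Q).symm x, ?_, ?_⟩
    · apply (Emap Q).injective
      have h := congrFun (congrArg (DFunLike.coe) (intertwine Q)) ((Emap Q).symm x)
      simp only [AlgHom.comp_apply] at h
      show Fmap Q ((tauT Q) ((Emap Q).symm x)) = Fmap Q ((Emap Q).symm x)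
      rw [← h]
      have he : Fmap Q ((Emap Q).symm x) = x := (Emap Q).apply_symm_apply x
      rw [he]
      exact hx
    · exact (Emap Q).apply_symm_apply x

noncomputable def finalEquiv :
    (AlgHom.equalizer (tauT Q) (AlgHom.id ℝ (ℂ ⊗[ℝ] CliffordAlgebra Q)))
      ≃ₐ[ℝ] CliffordAlgebra (-Q) :=
  ((Emap Q).subalgebraMap _).trans <|
    (Subalgebra.equivOfEq _ _ ((map_equalizer Q).trans (range_eq_equalizerCA).symm)).trans
      (AlgEquiv.ofInjective _ includeRight_injCA).symm

end Gen2


/-- The fixed-point subalgebra of `τ` (the subalgebra `Cl⁰_{p,q} ⊕ i Cl¹_{p,q}`) is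
isomorphic as an ℝ-algebra to the Clifford algebra of `−Q_{p,q}`, i.e. of signature `(q,p)`. -/
theorem statement12 (p q : ℕ) (hn : 1 ≤ p + q) :
    Nonempty ((AlgHom.equalizer (tauC p q) (AlgHom.id ℝ (ℂ ⊗[ℝ] CliffordAlgebra (Qpq p q))))
      ≃ₐ[ℝ] CliffordAlgebra (-Qpq p q)) := by
  exact ⟨finalEquiv (Qpq p q)⟩
end
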